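/- Let F : R^N → R^N be μ-strongly monotone and θ₀-Lipschitz, and let 𝐅 : R^{N²} → R^N be θ-Lipschitz with 𝐅(1_N ⊗ x) = F(x). Let R be the block selection matrix with ‖R‖₂ = 1, L the Laplacian of a connected graph, 𝐋 = L ⊗ I_N, and Ψ the 2×2 matrix [[μ/N, -(θ+θ₀)/(2√N)], [-(θ+θ₀)/(2√N), c₀λ₂(L) - θ]]. Then for any 𝐱 ∈ R^{N²} and any 𝐲 ∈ Ker(𝐋), (𝐱-𝐲)ᵀ(R𝐅(𝐱) - R𝐅(𝐲) + c₀𝐋(𝐱-𝐲)) ≥ λ_min(Ψ)‖𝐱-𝐲‖². -/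

import Mathlib

/-!
Write `𝐲 = 1 ⊗ w` (for a connected graph, `Ker (L ⊗ I)` consists of consensus vectors) and
`𝐱 = 1 ⊗ x̄ + v` with `x̄` the agent average, so that every column of the disagreement `v` sums
to zero. Then `𝐱 - 𝐲 = 1 ⊗ (x̄ - w) + v` splits orthogonally, `‖𝐱 - 𝐲‖² = N‖x̄ - w‖² + ‖v‖²`, and
`L ⊗ I` only sees `v`, where it is at least `λ₂(L)‖v‖²`. As `Rᵀ(1 ⊗ x) = x`, the pseudo-gradient
term is `(x̄ - w + Rᵀv) ⬝ (F x̄ - F w + 𝐅 𝐱 - 𝐅(1 ⊗ x̄))`: strong monotonicity bounds the main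
part, and Cauchy–Schwarz with the two Lipschitz constants and `‖Rᵀv‖ ≤ ‖v‖` the three cross
terms. The resulting lower bound is the quadratic form of `Ψ` at `(√N‖x̄ - w‖, ‖v‖)`, which is at
least `λ_min(Ψ)` times the squared norm of that vector.
-/

open Matrix Kronecker

section DotProduct
variable {n : Type*} [Fintype n]

theorem dotProduct_self_nonneg (v : n → ℝ) : 0 ≤ v ⬝ᵥ v :=
  Finset.sum_nonneg fun _ _ => mul_self_nonneg _

theorem neg_sqrt_mul_sqrt_le_dotProduct (a b : n → ℝ) :
    -(√(a ⬝ᵥ a) * √(b ⬝ᵥ b)) ≤ a ⬝ᵥ b := by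
  have h := Real.sum_mul_le_sqrt_mul_sqrt Finset.univ (-a) b
  simp only [Pi.neg_apply, neg_mul, Finset.sum_neg_distrib, neg_sq] at h
  simpa only [dotProduct, sq, neg_le] using h

theorem sub_le_add_dotProduct_add {p q f g : n → ℝ} {μ θ₀ θ r : ℝ}
    (hpf : μ * (p ⬝ᵥ p) ≤ p ⬝ᵥ f) (hf : √(f ⬝ᵥ f) ≤ θ₀ * √(p ⬝ᵥ p))
    (hg : √(g ⬝ᵥ g) ≤ θ * r) (hq : √(q ⬝ᵥ q) ≤ r) :
    μ * (p ⬝ᵥ p) - (θ₀ + θ) * (√(p ⬝ᵥ p) * r) - θ * r ^ 2 ≤ (p + q) ⬝ᵥ (f + g) := by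
  have hr : 0 ≤ r := (Real.sqrt_nonneg _).trans hq
  have hqf : √(q ⬝ᵥ q) * √(f ⬝ᵥ f) ≤ r * (θ₀ * √(p ⬝ᵥ p)) :=
    mul_le_mul hq hf (Real.sqrt_nonneg _) hr
  have hpg : √(p ⬝ᵥ p) * √(g ⬝ᵥ g) ≤ √(p ⬝ᵥ p) * (θ * r) :=
    mul_le_mul_of_nonneg_left hg (Real.sqrt_nonneg _)
  have hqg : √(q ⬝ᵥ q) * √(g ⬝ᵥ g) ≤ r * (θ * r) := mul_le_mul hq hg (Real.sqrt_nonneg _) hr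
  rw [add_dotProduct, dotProduct_add, dotProduct_add]
  linarith [neg_sqrt_mul_sqrt_le_dotProduct q f, neg_sqrt_mul_sqrt_le_dotProduct p g,
    neg_sqrt_mul_sqrt_le_dotProduct q g]

theorem Matrix.IsSymm.add_dotProduct_mulVec_add {A : Matrix n n ℝ} (hA : A.IsSymm)
    {u : n → ℝ} (hu : A *ᵥ u = 0) (v : n → ℝ) :
    (u + v) ⬝ᵥ (A *ᵥ (u + v)) = v ⬝ᵥ (A *ᵥ v) := by
  rw [mulVec_add, hu, zero_add, add_dotProduct, dotProduct_mulVec u, ← mulVec_transpose, hA.eq,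
    hu, zero_dotProduct, zero_add]

theorem OrthonormalBasis.dotProduct_eq_sum_mul {ι : Type*} [Fintype ι]
    (b : OrthonormalBasis ι ℝ (EuclideanSpace ℝ n)) (v w : n → ℝ) :
    v ⬝ᵥ w = ∑ i, ((b i).ofLp ⬝ᵥ v) * ((b i).ofLp ⬝ᵥ w) := by
  have h := b.sum_inner_mul_inner (WithLp.toLp 2 v) (WithLp.toLp 2 w)
  simp only [EuclideanSpace.inner_eq_star_dotProduct, star_trivial] at h
  rw [dotProduct_comm v, ← h]
  simp only [dotProduct_comm w]

end DotProduct

namespace Matrix.IsHermitian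
variable {n : Type*} [Fintype n] [DecidableEq n] {A : Matrix n n ℝ}

theorem dotProduct_mulVec_eq_sum_eigenvalues_mul_sq (hA : A.IsHermitian) (v : n → ℝ) :
    v ⬝ᵥ (A *ᵥ v) = ∑ i, hA.eigenvalues i * ((hA.eigenvectorBasis i).ofLp ⬝ᵥ v) ^ 2 := by
  rw [hA.eigenvectorBasis.dotProduct_eq_sum_mul]
  refine Finset.sum_congr rfl fun i _ => ?_
  rw [dotProduct_mulVec, ← mulVec_transpose, ← conjTranspose_eq_transpose_of_trivial, hA.eq,
    hA.mulVec_eigenvectorBasis, smul_dotProduct, smul_eq_mul]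
  ring

theorem mul_dotProduct_self_le_dotProduct_mulVec (hA : A.IsHermitian) {c : ℝ} (v : n → ℝ)
    (hc : ∀ i, (hA.eigenvectorBasis i).ofLp ⬝ᵥ v ≠ 0 → c ≤ hA.eigenvalues i) :
    c * (v ⬝ᵥ v) ≤ v ⬝ᵥ (A *ᵥ v) := by
  rw [hA.dotProduct_mulVec_eq_sum_eigenvalues_mul_sq, hA.eigenvectorBasis.dotProduct_eq_sum_mul,
    Finset.mul_sum]
  refine Finset.sum_le_sum fun i _ => ?_
  by_cases hi : (hA.eigenvectorBasis i).ofLp ⬝ᵥ v = 0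
  · simp [hi]
  · rw [← sq]
    exact mul_le_mul_of_nonneg_right (hc i hi) (sq_nonneg _)

theorem iInf_eigenvalues_mul_dotProduct_self_le (hA : A.IsHermitian) (v : n → ℝ) :
    (⨅ i, hA.eigenvalues i) * (v ⬝ᵥ v) ≤ v ⬝ᵥ (A *ᵥ v) :=
  hA.mul_dotProduct_self_le_dotProduct_mulVec v fun i _ => ciInf_le (Finite.bddBelow_range _) i

theorem iInf_eigenvalues_mul_le_fin_two {a b d : ℝ} (h : (!![a, b; b, d]).IsHermitian)
    (s t : ℝ) :
    (⨅ i, h.eigenvalues i) * (s ^ 2 + t ^ 2) ≤ a * s ^ 2 + 2 * b * (s * t) + d * t ^ 2 := by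
  have h := h.iInf_eigenvalues_mul_dotProduct_self_le ![s, t]
  simp only [dotProduct, mulVec, Fin.sum_univ_two, of_apply, cons_val', cons_val_zero,
    cons_val_one, empty_val', cons_val_fin_one] at h
  linarith

end Matrix.IsHermitian

namespace SimpleGraph
variable {V : Type*} [Fintype V] [DecidableEq V] {G : SimpleGraph V} [DecidableRel G.Adj]

theorem Connected.dotProduct_eq_zero_of_lapMatrix_mulVec_eq_zero (hG : G.Connected)
    {x v : V → ℝ} (hx : G.lapMatrix ℝ *ᵥ x = 0) (hv : ∑ k, v k = 0) : x ⬝ᵥ v = 0 := by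
  obtain ⟨i⟩ := hG.nonempty
  have hconst : x = fun _ => x i :=
    funext fun j => (lapMatrix_mulVec_eq_zero_iff_forall_reachable G).mp hx j i (hG j i)
  rw [hconst, dotProduct, ← Finset.mul_sum, hv, mul_zero]

theorem Connected.mul_dotProduct_self_le_of_sum_eq_zero (hG : G.Connected)
    (hL : (G.lapMatrix ℝ).IsHermitian) {c : ℝ}
    (hc : ∀ i, hL.eigenvalues i ≠ 0 → c ≤ hL.eigenvalues i) {v : V → ℝ} (hv : ∑ k, v k = 0) :
    c * (v ⬝ᵥ v) ≤ v ⬝ᵥ (G.lapMatrix ℝ *ᵥ v) :=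
  hL.mul_dotProduct_self_le_dotProduct_mulVec v fun i hi => hc i fun h0 =>
    hi (hG.dotProduct_eq_zero_of_lapMatrix_mulVec_eq_zero
      (by rw [hL.mulVec_eigenvectorBasis, h0, zero_smul]) hv)

end SimpleGraph

namespace Consensus
variable {V ι : Type*} [Fintype V]

/-- The consensus vector `1 ⊗ x`; an index `(i, j)` is the `j`-th coordinate of agent `i`. -/
def stack (x : ι → ℝ) : V × ι → ℝ := fun p => x p.2

def column (v : V × ι → ℝ) (j : ι) : V → ℝ := fun k => v (k, j)

theorem dotProduct_eq_sum_column [Fintype ι] (v w : V × ι → ℝ) :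
    v ⬝ᵥ w = ∑ j, column v j ⬝ᵥ column w j := by
  rw [dotProduct, Fintype.sum_prod_type, Finset.sum_comm]
  rfl

theorem stack_dotProduct_eq_zero [Fintype ι] (x : ι → ℝ) {v : V × ι → ℝ}
    (hv : ∀ j, ∑ k, column v j k = 0) : stack x ⬝ᵥ v = 0 := by
  rw [dotProduct_eq_sum_column]
  refine Finset.sum_eq_zero fun j _ => ?_
  simp only [dotProduct, column, stack, ← Finset.mul_sum]
  exact mul_eq_zero_of_right _ (hv j)

theorem stack_add_dotProduct_self [Fintype ι] (x : ι → ℝ) {v : V × ι → ℝ}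
    (hv : ∀ j, ∑ k, column v j k = 0) :
    (stack x + v) ⬝ᵥ (stack x + v) = Fintype.card V * (x ⬝ᵥ x) + v ⬝ᵥ v := by
  have hxx : stack x ⬝ᵥ stack (V := V) x = Fintype.card V * (x ⬝ᵥ x) := by
    simp [dotProduct, stack, Fintype.sum_prod_type]
  rw [add_dotProduct, dotProduct_add, dotProduct_add, dotProduct_comm v,
    stack_dotProduct_eq_zero x hv, hxx]
  ring

theorem exists_eq_stack_add [Nonempty V] (xx : V × ι → ℝ) :
    ∃ x v, (∀ j, ∑ k, column v j k = 0) ∧ xx = stack x + v := by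
  refine ⟨fun j => (∑ k, xx (k, j)) / Fintype.card V, xx - stack _, fun j => ?_, by abel⟩
  simp only [column, stack, Pi.sub_apply, Finset.sum_sub_distrib, Finset.sum_const,
    Finset.card_univ, nsmul_eq_mul]
  field_simp
  ring

variable [Fintype ι] [DecidableEq ι]

theorem column_kronecker_one_mulVec (A : Matrix V V ℝ) (v : V × ι → ℝ) (j : ι) :
    column ((A ⊗ₖ (1 : Matrix ι ι ℝ)) *ᵥ v) j = A *ᵥ column v j := by
  ext i
  simp [column, mulVec, dotProduct, Fintype.sum_prod_type, one_apply]

theorem kronecker_one_mulVec_eq_zero_iff {A : Matrix V V ℝ} {v : V × ι → ℝ} :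
    (A ⊗ₖ (1 : Matrix ι ι ℝ)) *ᵥ v = 0 ↔ ∀ j, A *ᵥ column v j = 0 := by
  simp only [← column_kronecker_one_mulVec, funext_iff, Prod.forall, column, Pi.zero_apply]
  exact forall_comm

end Consensus

namespace SimpleGraph
open Consensus
variable {V ι : Type*} [Fintype V] [DecidableEq V] [DecidableEq ι]
  {G : SimpleGraph V} [DecidableRel G.Adj]

theorem isSymm_lapMatrix_kronecker_one : (G.lapMatrix ℝ ⊗ₖ (1 : Matrix ι ι ℝ)).IsSymm := by
  rw [IsSymm, ← kroneckerMap_transpose, (isSymm_lapMatrix ℝ G).eq, transpose_one]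

variable [Fintype ι]

theorem lapMatrix_kronecker_one_mulVec_stack (x : ι → ℝ) :
    (G.lapMatrix ℝ ⊗ₖ (1 : Matrix ι ι ℝ)) *ᵥ stack (V := V) x = 0 := by
  refine kronecker_one_mulVec_eq_zero_iff.mpr fun j => ?_
  rw [show column (stack (V := V) x) j = x j • fun _ => 1 from funext fun _ => (mul_one _).symm,
    mulVec_smul, lapMatrix_mulVec_const_eq_zero, smul_zero]

theorem Connected.exists_eq_stack_of_lapMatrix_kronecker_one_mulVec_eq_zero (hG : G.Connected)
    {y : V × ι → ℝ} (hy : (G.lapMatrix ℝ ⊗ₖ (1 : Matrix ι ι ℝ)) *ᵥ y = 0) :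
    ∃ w, y = stack w := by
  obtain ⟨i₀⟩ := hG.nonempty
  refine ⟨fun j => y (i₀, j), funext fun ⟨i, j⟩ => ?_⟩
  exact (lapMatrix_mulVec_eq_zero_iff_forall_reachable G).mp
    (kronecker_one_mulVec_eq_zero_iff.mp hy j) i i₀ (hG i i₀)

theorem Connected.mul_dotProduct_self_le_lapMatrix_kronecker_one (hG : G.Connected)
    (hL : (G.lapMatrix ℝ).IsHermitian) {c : ℝ}
    (hc : ∀ i, hL.eigenvalues i ≠ 0 → c ≤ hL.eigenvalues i) (x : ι → ℝ) {v : V × ι → ℝ}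
    (hv : ∀ j, ∑ k, column v j k = 0) :
    c * (v ⬝ᵥ v) ≤ (stack x + v) ⬝ᵥ ((G.lapMatrix ℝ ⊗ₖ (1 : Matrix ι ι ℝ)) *ᵥ (stack x + v)) := by
  rw [isSymm_lapMatrix_kronecker_one.add_dotProduct_mulVec_add
    (lapMatrix_kronecker_one_mulVec_stack x), dotProduct_eq_sum_column, dotProduct_eq_sum_column,
    Finset.mul_sum]
  simp_rw [column_kronecker_one_mulVec]
  exact Finset.sum_le_sum fun j _ => hG.mul_dotProduct_self_le_of_sum_eq_zero hL hc (hv j)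

end SimpleGraph

namespace Consensus
variable {n : Type*} [Fintype n]

def selectionMatrix (n : Type*) [DecidableEq n] : Matrix (n × n) n ℝ :=
  of fun p k => if p.1 = k ∧ p.2 = k then 1 else 0

theorem vecMul_selectionMatrix [DecidableEq n] (v : n × n → ℝ) :
    v ᵥ* selectionMatrix n = fun k => v (k, k) := by
  ext k
  simp [selectionMatrix, vecMul, dotProduct, Fintype.sum_prod_type, ite_and]

theorem diag_dotProduct_self_le (v : n × n → ℝ) :
    (fun k => v (k, k)) ⬝ᵥ (fun k => v (k, k)) ≤ v ⬝ᵥ v := by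
  rw [dotProduct, dotProduct, Fintype.sum_prod_type]
  exact Finset.sum_le_sum fun k _ =>
    Finset.single_le_sum (f := fun j => v (k, j) * v (k, j)) (fun _ _ => mul_self_nonneg _)
      (Finset.mem_univ k)

theorem sub_le_dotProduct_selectionMatrix_mulVec [DecidableEq n] {F : (n → ℝ) → n → ℝ}
    {bF : (n × n → ℝ) → n → ℝ} {μ θ₀ θ : ℝ}
    (hmono : ∀ x y : n → ℝ, μ * ((x - y) ⬝ᵥ (x - y)) ≤ (x - y) ⬝ᵥ (F x - F y))
    (hFlip : ∀ x y : n → ℝ,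
      √((F x - F y) ⬝ᵥ (F x - F y)) ≤ θ₀ * √((x - y) ⬝ᵥ (x - y)))
    (hbFlip : ∀ xx yy : n × n → ℝ,
      √((bF xx - bF yy) ⬝ᵥ (bF xx - bF yy)) ≤ θ * √((xx - yy) ⬝ᵥ (xx - yy)))
    (hconsist : ∀ x, bF (stack x) = F x) (x w : n → ℝ) (v : n × n → ℝ) :
    μ * ((x - w) ⬝ᵥ (x - w)) - (θ₀ + θ) * (√((x - w) ⬝ᵥ (x - w)) * √(v ⬝ᵥ v)) - θ * (v ⬝ᵥ v) ≤
      (stack (x - w) + v) ⬝ᵥ (selectionMatrix n *ᵥ (bF (stack x + v) - bF (stack w))) := by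
  have hdiag : (stack (x - w) + v) ᵥ* selectionMatrix n = (x - w) + fun k => v (k, k) := by
    rw [vecMul_selectionMatrix]
    rfl
  have hsplit :
      bF (stack x + v) - bF (stack w) = (F x - F w) + (bF (stack x + v) - bF (stack x)) := by
    rw [← hconsist x, ← hconsist w]
    abel
  have hv := hbFlip (stack x + v) (stack x)
  rw [add_sub_cancel_left] at hv
  have h := sub_le_add_dotProduct_add (hmono x w) (hFlip x w) hv
    (Real.sqrt_le_sqrt (diag_dotProduct_self_le v))
  rwa [Real.sq_sqrt (dotProduct_self_nonneg v), ← hsplit, ← hdiag, ← dotProduct_mulVec] at h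

end Consensus

open Consensus

theorem restricted_strong_monotonicity_general (N : ℕ)
    (μ θ θ₀ c₀ : ℝ) (hc₀ : 0 < c₀)
    (F : (Fin N → ℝ) → (Fin N → ℝ))
    (hmono : ∀ x y : Fin N → ℝ, μ * ((x - y) ⬝ᵥ (x - y)) ≤ (x - y) ⬝ᵥ (F x - F y))
    (hFlip : ∀ x y : Fin N → ℝ,
      Real.sqrt ((F x - F y) ⬝ᵥ (F x - F y)) ≤ θ₀ * Real.sqrt ((x - y) ⬝ᵥ (x - y)))
    (bF : (Fin N × Fin N → ℝ) → (Fin N → ℝ))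
    (hbFlip : ∀ xx yy : Fin N × Fin N → ℝ,
      Real.sqrt ((bF xx - bF yy) ⬝ᵥ (bF xx - bF yy)) ≤
        θ * Real.sqrt ((xx - yy) ⬝ᵥ (xx - yy)))
    (hconsist : ∀ x : Fin N → ℝ, bF (fun p => x p.2) = F x)
    (R : Matrix (Fin N × Fin N) (Fin N) ℝ)
    (hR : R = Matrix.of fun p k => if p.1 = k ∧ p.2 = k then (1 : ℝ) else 0)
    (G : SimpleGraph (Fin N)) [DecidableRel G.Adj] (hconn : G.Connected)
    (hL : (G.lapMatrix ℝ).IsHermitian) (lam2 : ℝ)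
    (hmin : ∀ i, hL.eigenvalues i ≠ 0 → lam2 ≤ hL.eigenvalues i)
    (Ψ : Matrix (Fin 2) (Fin 2) ℝ)
    (hΨ : Ψ = !![μ / N, -(θ + θ₀) / (2 * Real.sqrt N);
                 -(θ + θ₀) / (2 * Real.sqrt N), c₀ * lam2 - θ])
    (hΨh : Ψ.IsHermitian) :
    ∀ xx yy : Fin N × Fin N → ℝ,
      ((G.lapMatrix ℝ) ⊗ₖ (1 : Matrix (Fin N) (Fin N) ℝ)) *ᵥ yy = 0 →
        (⨅ i, hΨh.eigenvalues i) * ((xx - yy) ⬝ᵥ (xx - yy)) ≤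
          (xx - yy) ⬝ᵥ (R *ᵥ (bF xx) - R *ᵥ (bF yy) +
            c₀ • (((G.lapMatrix ℝ) ⊗ₖ (1 : Matrix (Fin N) (Fin N) ℝ)) *ᵥ (xx - yy))) := by
  intro xx yy hker
  obtain rfl : R = selectionMatrix (Fin N) := hR
  subst hΨ
  have hne : Nonempty (Fin N) := hconn.nonempty
  obtain ⟨w, rfl⟩ := hconn.exists_eq_stack_of_lapMatrix_kronecker_one_mulVec_eq_zero hker
  obtain ⟨x, v, hv, rfl⟩ := exists_eq_stack_add xx
  rw [show stack x + v - stack w = stack (x - w) + v by rw [add_sub_right_comm]; rfl,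
    stack_add_dotProduct_self _ hv, Fintype.card_fin, dotProduct_add, dotProduct_smul,
    smul_eq_mul, ← mulVec_sub]
  have hgrad := sub_le_dotProduct_selectionMatrix_mulVec hmono hFlip hbFlip hconsist x w v
  have hlap := hconn.mul_dotProduct_self_le_lapMatrix_kronecker_one hL hmin (x - w) hv
  set P := (x - w) ⬝ᵥ (x - w)
  set Z := v ⬝ᵥ v
  have hP : 0 ≤ P := dotProduct_self_nonneg _
  have hZ : 0 ≤ Z := dotProduct_self_nonneg _
  have hN : (0 : ℝ) < N := by exact_mod_cast Fin.pos_iff_nonempty.mpr hne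
  have hΨv := hΨh.iInf_eigenvalues_mul_le_fin_two (√N * √P) √Z
  have hμP : μ / N * (√N * √P) ^ 2 = μ * P := by
    rw [mul_pow, Real.sq_sqrt hN.le, Real.sq_sqrt hP]
    field_simp
  have hcross : 2 * (-(θ + θ₀) / (2 * √N)) * (√N * √P * √Z) = -(θ + θ₀) * (√P * √Z) := by
    field_simp
  rw [hμP, hcross, mul_pow, Real.sq_sqrt hN.le, Real.sq_sqrt hP, Real.sq_sqrt hZ] at hΨv
  linarith [mul_le_mul_of_nonneg_left hlap hc₀.le]

/-- Restricted strong monotonicity of `x ↦ R𝐅(x) + c₀𝐋x` (Lemma 2 of the paper):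
if `F` is `μ`-strongly monotone and `θ₀`-Lipschitz, the extended pseudo-gradient `𝐅` is
`θ`-Lipschitz and agrees with `F` on the consensus subspace, `lam2 = λ₂(L)` is the smallest
nonzero eigenvalue of the Laplacian of the connected communication graph, and
`Ψ = [[μ/N, -(θ+θ₀)/(2√N)], [-(θ+θ₀)/(2√N), c₀λ₂(L) - θ]]`, then for any `𝐱` and any
`𝐲 ∈ Ker 𝐋`, `(𝐱-𝐲)ᵀ(R𝐅(𝐱) - R𝐅(𝐲) + c₀𝐋(𝐱-𝐲)) ≥ λ_min(Ψ)‖𝐱-𝐲‖²`. -/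
theorem restricted_strong_monotonicity (N : ℕ) (hN : 0 < N)
    (μ θ θ₀ c₀ : ℝ) (hμ : 0 < μ) (hθ : 0 < θ) (hθ₀ : 0 < θ₀) (hc₀ : 0 < c₀)
    (F : (Fin N → ℝ) → (Fin N → ℝ))
    (hmono : ∀ x y : Fin N → ℝ, μ * ((x - y) ⬝ᵥ (x - y)) ≤ (x - y) ⬝ᵥ (F x - F y))
    (hFlip : ∀ x y : Fin N → ℝ,
      Real.sqrt ((F x - F y) ⬝ᵥ (F x - F y)) ≤ θ₀ * Real.sqrt ((x - y) ⬝ᵥ (x - y)))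
    (bF : (Fin N × Fin N → ℝ) → (Fin N → ℝ))
    (hbFlip : ∀ xx yy : Fin N × Fin N → ℝ,
      Real.sqrt ((bF xx - bF yy) ⬝ᵥ (bF xx - bF yy)) ≤
        θ * Real.sqrt ((xx - yy) ⬝ᵥ (xx - yy)))
    (hconsist : ∀ x : Fin N → ℝ, bF (fun p => x p.2) = F x)
    (R : Matrix (Fin N × Fin N) (Fin N) ℝ)
    (hR : R = Matrix.of fun p k => if p.1 = k ∧ p.2 = k then (1 : ℝ) else 0)
    (G : SimpleGraph (Fin N)) [DecidableRel G.Adj] (hconn : G.Connected)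
    (hL : (G.lapMatrix ℝ).IsHermitian) (lam2 : ℝ)
    (hmem : ∃ i, hL.eigenvalues i = lam2) (hlam2 : lam2 ≠ 0)
    (hmin : ∀ i, hL.eigenvalues i ≠ 0 → lam2 ≤ hL.eigenvalues i)
    (Ψ : Matrix (Fin 2) (Fin 2) ℝ)
    (hΨ : Ψ = !![μ / N, -(θ + θ₀) / (2 * Real.sqrt N);
                 -(θ + θ₀) / (2 * Real.sqrt N), c₀ * lam2 - θ])
    (hΨh : Ψ.IsHermitian) :
    ∀ xx yy : Fin N × Fin N → ℝ,
      ((G.lapMatrix ℝ) ⊗ₖ (1 : Matrix (Fin N) (Fin N) ℝ)) *ᵥ yy = 0 →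
        (⨅ i, hΨh.eigenvalues i) * ((xx - yy) ⬝ᵥ (xx - yy)) ≤
          (xx - yy) ⬝ᵥ (R *ᵥ (bF xx) - R *ᵥ (bF yy) +
            c₀ • (((G.lapMatrix ℝ) ⊗ₖ (1 : Matrix (Fin N) (Fin N) ℝ)) *ᵥ (xx - yy))) :=
  restricted_strong_monotonicity_general N μ θ θ₀ c₀ hc₀ F hmono hFlip bF hbFlip hconsist R hR G
    hconn hL lam2 hmin Ψ hΨ hΨh
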